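/- The image of the centering operator J : L⁰ × ℤ → E^m × ℤ is exactly the centred state space: Im(J) = L^m. -/

import Mathlib

open scoped BigOperators

namespace COB

/-- Vectors of queue sizes indexed by prices in `I = {−d',…,d'}` (functions `ℤ → ℕ`
vanishing outside `I`; the support condition is part of membership in `Em`). -/
abbrev VecC := ℤ → ℕ

/-- Pairs (buy side, sell side). -/
abbrev EC := VecC × VecC

/-- A vector is supported in `{−d',…,d'}`. -/
def suppIn (d' : ℕ) (Z : VecC) : Prop :=
  ∀ j : ℤ, Z j ≠ 0 → -(d' : ℤ) ≤ j ∧ j ≤ (d' : ℤ)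

/-- Price support of a vector, inside `I = {−d',…,d'}`. -/
noncomputable def suppC (d' : ℕ) (Z : VecC) : Finset ℤ :=
  (Finset.Icc (-(d' : ℤ)) (d' : ℤ)).filter fun j => 0 < Z j

/-- `sup` of a finite set of prices, with the convention `sup ∅ = −d'`. -/
def supD (d' : ℕ) (S : Finset ℤ) : ℤ := if h : S.Nonempty then S.max' h else -(d' : ℤ)

/-- `inf` of a finite set of prices, with the convention `inf ∅ = d'`. -/
def infD (d' : ℕ) (S : Finset ℤ) : ℤ := if h : S.Nonempty then S.min' h else (d' : ℤ)

/-- bid price `b(X) = sup supp(X⁺)` (convention `sup supp(0) = −d'`). -/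
noncomputable def bC (d' : ℕ) (X : EC) : ℤ := supD d' (suppC d' X.1)

/-- ask price `a(X) = inf supp(X⁻)` (convention `inf supp(0) = d'`). -/
noncomputable def aC (d' : ℕ) (X : EC) : ℤ := infD d' (suppC d' X.2)

/-- `E^m`: configurations supported in `I` with nonempty buy and sell sides. -/
def Em (d' : ℕ) : Set EC :=
  {X | suppIn d' X.1 ∧ suppIn d' X.2 ∧ X.1 ≠ 0 ∧ X.2 ≠ 0}

/-- `L⁰`: elements of `E^m` with `a(X) > b(X)`. -/
def L0 (d' : ℕ) : Set EC := {X | X ∈ Em d' ∧ bC d' X < aC d' X}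

/-- `p̂`: the parity of `p` (`0` if `p` is even, `1` if `p` is odd). -/
def hatp (p : ℤ) : ℤ := p % 2

/-- `⌈p/2⌉` for an integer `p`. -/
def ceilHalf (p : ℤ) : ℤ := Int.fdiv (p + 1) 2

/-- `[p,p'] = ⌈p'/2⌉ − ⌈p/2⌉`. -/
def shift (p p' : ℤ) : ℤ := ceilHalf p' - ceilHalf p

/-- The centred state space `L^m`. -/
def Lm (d' : ℕ) : Set (EC × ℤ) :=
  {Xp | Xp.1 ∈ Em d' ∧ bC d' Xp.1 < aC d' Xp.1 ∧
    aC d' Xp.1 + bC d' Xp.1 + hatp Xp.2 = 0}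

/-- The truncating shift `σ_i` on a single vector. -/
def sigmaV (d' : ℕ) (i : ℤ) (Y : VecC) : VecC := fun j =>
  if min (d' : ℤ) ((d' : ℤ) - i) < j ∨ j < max (-(d' : ℤ)) (-(d' : ℤ) - i) then 0
  else Y (j + i)

/-- The truncating shift `σ_i` acting componentwise on pairs. -/
def sigmaP (d' : ℕ) (i : ℤ) (Y : EC) : EC := (sigmaV d' i Y.1, sigmaV d' i Y.2)

/-- The centering operator `J(Y,p) = (σ_{[p,p']}(Y), p')`, `p' = p + a(Y) + b(Y) + p̂`. -/
noncomputable def J (d' : ℕ) (Y : EC) (p : ℤ) : EC × ℤ :=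
  (sigmaP d' (shift p (p + aC d' Y + bC d' Y + hatp p)) Y,
    p + aC d' Y + bC d' Y + hatp p)

/-!
Write `a, b` for the ask and bid of `Y ∈ L⁰` and `p'` for the new mid-price index. Since
`p + p̂` is even, `p'` has the parity of `a + b`, so the shift is `i = [p,p'] = ⌈(a + b)/2⌉`.
Because `b < a` in `I`, both `b − i` and `a − i` stay in `I`, so `σ_i` moves the extreme
prices without truncating them: the new ask and bid are `a − i` and `b − i`, whose sum
`−(a + b) mod 2` cancels the parity of `p'`. Conversely, on `L^m` we have `p' = p`, hence a
zero shift, and `J` fixes every centred state.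
-/

section Support

variable {d' : ℕ} {Z : VecC} {X : EC} {j a b : ℤ}

lemma mem_suppC : j ∈ suppC d' Z ↔ (-(d' : ℤ) ≤ j ∧ j ≤ d') ∧ 0 < Z j := by
  simp [suppC]

lemma suppC_nonempty_iff (hZ : suppIn d' Z) : (suppC d' Z).Nonempty ↔ Z ≠ 0 := by
  constructor
  · rintro ⟨j, hj⟩ rfl
    exact (mem_suppC.1 hj).2.ne' rfl
  · intro hne
    obtain ⟨j, hj⟩ := Function.ne_iff.1 hne
    exact ⟨j, mem_suppC.2 ⟨hZ j hj, Nat.pos_of_ne_zero hj⟩⟩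

lemma bC_eq_of_isGreatest (h : IsGreatest (suppC d' X.1 : Set ℤ) b) : bC d' X = b := by
  have hne : (suppC d' X.1).Nonempty := ⟨b, h.1⟩
  rw [bC, supD, dif_pos hne]
  exact (Finset.isGreatest_max' _ hne).unique h

lemma aC_eq_of_isLeast (h : IsLeast (suppC d' X.2 : Set ℤ) a) : aC d' X = a := by
  have hne : (suppC d' X.2).Nonempty := ⟨a, h.1⟩
  rw [aC, infD, dif_pos hne]
  exact (Finset.isLeast_min' _ hne).unique h

lemma isGreatest_bC (hX : suppIn d' X.1) (hne : X.1 ≠ 0) :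
    IsGreatest (suppC d' X.1 : Set ℤ) (bC d' X) := by
  have hN := (suppC_nonempty_iff hX).2 hne
  rw [bC, supD, dif_pos hN]
  exact Finset.isGreatest_max' _ hN

lemma isLeast_aC (hX : suppIn d' X.2) (hne : X.2 ≠ 0) :
    IsLeast (suppC d' X.2 : Set ℤ) (aC d' X) := by
  have hN := (suppC_nonempty_iff hX).2 hne
  rw [aC, infD, dif_pos hN]
  exact Finset.isLeast_min' _ hN

end Support

section Shift

variable {d' : ℕ} {Z : VecC} {i j a b : ℤ}

lemma suppIn_sigmaV : suppIn d' (sigmaV d' i Z) := by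
  intro j hj
  unfold sigmaV at hj
  split_ifs at hj with h
  · exact absurd rfl hj
  · omega

lemma mem_suppC_sigmaV :
    j ∈ suppC d' (sigmaV d' i Z) ↔ j + i ∈ suppC d' Z ∧ -(d' : ℤ) ≤ j ∧ j ≤ d' := by
  simp only [mem_suppC, sigmaV]
  split_ifs <;> omega

lemma sigmaV_zero (hZ : suppIn d' Z) : sigmaV d' 0 Z = Z := by
  funext j
  unfold sigmaV
  split_ifs with h
  · by_contra hne
    have := hZ j (Ne.symm hne)
    omega
  · rw [add_zero]

lemma isGreatest_suppC_sigmaV (hb : IsGreatest (suppC d' Z : Set ℤ) b)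
    (hlo : -(d' : ℤ) ≤ b - i) (hhi : b - i ≤ d') :
    IsGreatest (suppC d' (sigmaV d' i Z) : Set ℤ) (b - i) := by
  refine ⟨mem_suppC_sigmaV.2 ⟨by simpa using hb.1, hlo, hhi⟩, fun j hj => ?_⟩
  have := hb.2 (mem_suppC_sigmaV.1 hj).1
  omega

lemma isLeast_suppC_sigmaV (ha : IsLeast (suppC d' Z : Set ℤ) a)
    (hlo : -(d' : ℤ) ≤ a - i) (hhi : a - i ≤ d') :
    IsLeast (suppC d' (sigmaV d' i Z) : Set ℤ) (a - i) := by
  refine ⟨mem_suppC_sigmaV.2 ⟨by simpa using ha.1, hlo, hhi⟩, fun j hj => ?_⟩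
  have := ha.2 (mem_suppC_sigmaV.1 hj).1
  omega

lemma sigmaP_zero {Y : EC} (hY : Y ∈ Em d') : sigmaP d' 0 Y = Y := by
  rw [sigmaP, sigmaV_zero hY.1, sigmaV_zero hY.2.1]

end Shift

lemma two_mul_shift (p a b : ℤ) : 2 * shift p (p + a + b + hatp p) = a + b + (a + b) % 2 := by
  simp only [shift, ceilHalf, hatp, Int.fdiv_eq_ediv_of_nonneg _ zero_le_two]
  omega

lemma J_mem_Lm {d' : ℕ} {Y : EC} (p : ℤ) (hY : Y ∈ L0 d') : J d' Y p ∈ Lm d' := by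
  obtain ⟨⟨hY₁, hY₂, hne₁, hne₂⟩, hba⟩ := hY
  have hb := isGreatest_bC hY₁ hne₁
  have ha := isLeast_aC hY₂ hne₂
  have hbI := (mem_suppC.1 hb.1).1
  have haI := (mem_suppC.1 ha.1).1
  obtain ⟨i, hi⟩ : ∃ i, i = shift p (p + aC d' Y + bC d' Y + hatp p) := ⟨_, rfl⟩
  have hi2 := two_mul_shift p (aC d' Y) (bC d' Y)
  rw [← hi] at hi2
  have hb' : IsGreatest (suppC d' (sigmaV d' i Y.1) : Set ℤ) (bC d' Y - i) :=
    isGreatest_suppC_sigmaV hb (by omega) (by omega)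
  have ha' : IsLeast (suppC d' (sigmaV d' i Y.2) : Set ℤ) (aC d' Y - i) :=
    isLeast_suppC_sigmaV ha (by omega) (by omega)
  have hbJ : bC d' (sigmaP d' i Y) = bC d' Y - i := bC_eq_of_isGreatest hb'
  have haJ : aC d' (sigmaP d' i Y) = aC d' Y - i := aC_eq_of_isLeast ha'
  rw [J, ← hi]
  refine ⟨⟨suppIn_sigmaV, suppIn_sigmaV, ?_, ?_⟩, ?_, ?_⟩
  · exact (suppC_nonempty_iff suppIn_sigmaV).1 ⟨_, hb'.1⟩
  · exact (suppC_nonempty_iff suppIn_sigmaV).1 ⟨_, ha'.1⟩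
  · rw [hbJ, haJ]
    omega
  · simp only [haJ, hbJ, hatp]
    omega

lemma J_eq_self_of_mem_Lm {d' : ℕ} {Z : EC × ℤ} (hZ : Z ∈ Lm d') : J d' Z.1 Z.2 = Z := by
  have hp : Z.2 + aC d' Z.1 + bC d' Z.1 + hatp Z.2 = Z.2 := by
    linarith [hZ.2.2]
  rw [J, hp, shift, sub_self, sigmaP_zero hZ.1]

theorem J_image_eq_Lm_general (d' : ℕ) :
    {Z : EC × ℤ | ∃ Y : EC, ∃ p : ℤ, Y ∈ L0 d' ∧ J d' Y p = Z} = Lm d' := by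
  ext Z
  constructor
  · rintro ⟨Y, p, hY, rfl⟩
    exact J_mem_Lm p hY
  · intro hZ
    exact ⟨Z.1, Z.2, ⟨hZ.1, hZ.2.1⟩, J_eq_self_of_mem_Lm hZ⟩

/-- Lemma 4.5 of Cont–Degond–Xuan: the image of the centering
operator `J : L⁰ × ℤ → E^m × ℤ` is exactly the centred state space `L^m`. -/
theorem J_image_eq_Lm (d' : ℕ) (hd' : 1 ≤ d') :
    {Z : EC × ℤ | ∃ Y : EC, ∃ p : ℤ, Y ∈ L0 d' ∧ J d' Y p = Z} = Lm d' :=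
  J_image_eq_Lm_general d'

end COB
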